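/- arXiv:2410.21927 — 2 statements merged into one kernel-verified Lean document; each statement's English description precedes it below -/
import Mathlib

section
/- Maximum Principle: Under the standing assumptions, if u ∈ L²(Ω_m,ν) satisfies −Δ_m u(x) ≤ 0 for ν-a.e. x ∈ Ω and u ≤ 0 ν-a.e. on ∂_mΩ, then u ≤ 0 ν-a.e. in Ω_m. -/
open MeasureTheory Set

/-- The `m`-boundary of a set `Ω`. -/
def mBoundary {X : Type*} [MeasurableSpace X] (m : X → MeasureTheory.Measure X)
    (Ω : Set X) : Set X :=
  {x | x ∉ Ω ∧ 0 < m x Ω}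

/-- The `m`-closure of a set `Ω`. -/
def mClosure {X : Type*} [MeasurableSpace X] (m : X → MeasureTheory.Measure X)
    (Ω : Set X) : Set X :=
  Ω ∪ mBoundary m Ω

/-- The nonlocal `m`-Laplacian. -/
noncomputable def deltaM {X : Type*} [MeasurableSpace X] (m : X → MeasureTheory.Measure X)
    (u : X → ℝ) (x : X) : ℝ :=
  ∫ y, (u y - u x) ∂(m x)

/-- `m` is a random walk: each `m x` is a probability measure and `x ↦ m x A` is measurable. -/
def IsRandomWalk {X : Type*} [MeasurableSpace X] (m : X → MeasureTheory.Measure X) : Prop :=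
  (∀ x, IsProbabilityMeasure (m x)) ∧
    ∀ A : Set X, MeasurableSet A → Measurable fun x => m x A

/-- `ν` is reversible with respect to the random walk `m`. -/
def Reversible {X : Type*} [MeasurableSpace X] (m : X → MeasureTheory.Measure X)
    (ν : MeasureTheory.Measure X) : Prop :=
  ∀ F : X → X → ℝ, Measurable (Function.uncurry F) → (∃ C, ∀ x y, |F x y| ≤ C) →
    ∫ x, (∫ y, F x y ∂(m x)) ∂ν = ∫ x, (∫ y, F y x ∂(m x)) ∂ν

/-- `Ω` is `m`-connected with respect to `ν`. -/
def mConnected {X : Type*} [MeasurableSpace X] (m : X → MeasureTheory.Measure X)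
    (ν : MeasureTheory.Measure X) (Ω : Set X) : Prop :=
  ∀ A B : Set X, MeasurableSet A → MeasurableSet B → A ⊆ Ω → B ⊆ Ω → A ∪ B = Ω →
    ν A ≠ 0 → ν B ≠ 0 → 0 < ∫ x in A, (m x B).toReal ∂ν

/-- Membership in `L²₀(Ω_m, ν)`: square integrable on `Ω_m`, vanishing `ν`-a.e. on the
`m`-boundary, extended by `0` outside `Ω_m`. -/
def MemL20 {X : Type*} [MeasurableSpace X] (m : X → MeasureTheory.Measure X)
    (ν : MeasureTheory.Measure X) (Ω : Set X) (u : X → ℝ) : Prop :=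
  Measurable u ∧ MeasureTheory.MemLp u 2 (ν.restrict (mClosure m Ω)) ∧
    (∀ᵐ x ∂(ν.restrict (mBoundary m Ω)), u x = 0) ∧ ∀ x ∉ mClosure m Ω, u x = 0

/-- The nonlocal Dirichlet energy `(1/2)∬_{Ω_m×Ω_m} |u(y)-u(x)|² dm_x(y) dν(x)`. -/
noncomputable def gradEnergy {X : Type*} [MeasurableSpace X] (m : X → MeasureTheory.Measure X)
    (ν : MeasureTheory.Measure X) (Ω : Set X) (u : X → ℝ) : ℝ :=
  (1 / 2) * ∫ x in mClosure m Ω, (∫ y in mClosure m Ω, (u y - u x) ^ 2 ∂(m x)) ∂ν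

/-- The standing assumptions of the paper: reversible random walk space, `Ω` `m`-connected with
`0 < ν(Ω) < ν(Ω_m) < ∞`, a 2-Poincaré inequality with first eigenvalue `lam = λ_m(Ω)` attained
by an eigenfunction `φ` with `0 < α ≤ φ ≤ M` a.e. on `Ω` and `φ = 0` on `∂_mΩ`. -/
structure Standing {X : Type*} [MeasurableSpace X] (m : X → MeasureTheory.Measure X)
    (ν : MeasureTheory.Measure X) (Ω : Set X) (lam : ℝ) (φ : X → ℝ) (α M : ℝ) : Prop where
  hrw : IsRandomWalk m
  hrev : Reversible m ν
  hsigma : MeasureTheory.SigmaFinite ν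
  hmeasΩ : MeasurableSet Ω
  hconn : mConnected m ν Ω
  hpos : 0 < ν Ω
  hlt : ν Ω < ν (mClosure m Ω)
  hfin : ν (mClosure m Ω) < ⊤
  hlamPos : 0 < lam
  hpoincare : ∀ u : X → ℝ, MemL20 m ν Ω u →
    lam * ∫ x in Ω, u x ^ 2 ∂ν ≤ gradEnergy m ν Ω u
  hphiMem : MemL20 m ν Ω φ
  heig : ∀ᵐ x ∂(ν.restrict Ω), -(deltaM m φ x) = lam * φ x
  halphaPos : 0 < α
  halphaM : α ≤ M
  hphiLB : ∀ᵐ x ∂(ν.restrict Ω), α ≤ φ x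
  hphiUB : ∀ᵐ x ∂(ν.restrict Ω), φ x ≤ M

/-- Essential boundedness on a set `S` with respect to `ν`. -/
def IsBdd {X : Type*} [MeasurableSpace X] (ν : MeasureTheory.Measure X) (S : Set X)
    (u : X → ℝ) : Prop :=
  ∃ C : ℝ, ∀ᵐ x ∂(ν.restrict S), |u x| ≤ C

/-- A (nonnegative) solution of the Gelfand-type problem `(P(λ f))`. -/
def IsSol {X : Type*} [MeasurableSpace X] (m : X → MeasureTheory.Measure X)
    (ν : MeasureTheory.Measure X) (Ω : Set X) (lam : ℝ) (f : ℝ → ℝ) (u : X → ℝ) : Prop :=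
  MemL20 m ν Ω u ∧ (∀ᵐ x ∂(ν.restrict (mClosure m Ω)), 0 ≤ u x) ∧
    ∀ᵐ x ∂(ν.restrict Ω), -(deltaM m u x) = lam * f (u x)

/-- A solution of `(P(λ f))` without a sign constraint. -/
def IsSolNS {X : Type*} [MeasurableSpace X] (m : X → MeasureTheory.Measure X)
    (ν : MeasureTheory.Measure X) (Ω : Set X) (lam : ℝ) (f : ℝ → ℝ) (u : X → ℝ) : Prop :=
  MemL20 m ν Ω u ∧ ∀ᵐ x ∂(ν.restrict Ω), -(deltaM m u x) = lam * f (u x)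

/-- A minimal solution of `(P(λ f))`. -/
def IsMinimalSol {X : Type*} [MeasurableSpace X] (m : X → MeasureTheory.Measure X)
    (ν : MeasureTheory.Measure X) (Ω : Set X) (lam : ℝ) (f : ℝ → ℝ) (u : X → ℝ) : Prop :=
  IsSol m ν Ω lam f u ∧
    ∀ v : X → ℝ, IsSol m ν Ω lam f v → ∀ᵐ x ∂(ν.restrict (mClosure m Ω)), u x ≤ v x

/-- The extremal parameter `λ*`. -/
noncomputable def lamStar {X : Type*} [MeasurableSpace X] (m : X → MeasureTheory.Measure X)
    (ν : MeasureTheory.Measure X) (Ω : Set X) (f : ℝ → ℝ) : ℝ :=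
  sSup {lam : ℝ | 0 ≤ lam ∧ ∃ u : X → ℝ, IsSol m ν Ω lam f u ∧ IsBdd ν (mClosure m Ω) u}

/-- Hypotheses (H) on the nonlinearity `f` with constant `c₁`. -/
def HypH (f : ℝ → ℝ) (c₁ : ℝ) : Prop :=
  ContinuousOn f (Set.Ici 0) ∧ MonotoneOn f (Set.Ici 0) ∧ 0 < f 0 ∧ 0 < c₁ ∧
    ∀ s : ℝ, 0 ≤ s → c₁ * s ≤ f s

/-- The stability quadratic form `Q_u(v)` with linearized potential `fp ∘ u` (where `fp = f'`). -/
noncomputable def Qform {X : Type*} [MeasurableSpace X] (m : X → MeasureTheory.Measure X)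
    (ν : MeasureTheory.Measure X) (Ω : Set X) (lam : ℝ) (fp : ℝ → ℝ) (u v : X → ℝ) : ℝ :=
  gradEnergy m ν Ω v - lam * ∫ x in Ω, fp (u x) * v x ^ 2 ∂ν

/-- Stability of a solution: `Q_u(v) ≥ 0` for all test functions `v ∈ L^∞ ∩ L²₀`. -/
def IsStable {X : Type*} [MeasurableSpace X] (m : X → MeasureTheory.Measure X)
    (ν : MeasureTheory.Measure X) (Ω : Set X) (lam : ℝ) (fp : ℝ → ℝ) (u : X → ℝ) : Prop :=
  ∀ v : X → ℝ, MemL20 m ν Ω v → IsBdd ν (mClosure m Ω) v → 0 ≤ Qform m ν Ω lam fp u v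

/-- The first eigenvalue `μ₁(u)` of the linearized operator, as an infimum of `Q_u` over
normalized test functions. -/
noncomputable def mu1 {X : Type*} [MeasurableSpace X] (m : X → MeasureTheory.Measure X)
    (ν : MeasureTheory.Measure X) (Ω : Set X) (lam : ℝ) (fp : ℝ → ℝ) (u : X → ℝ) : ℝ :=
  sInf {r : ℝ | ∃ v : X → ℝ, MemL20 m ν Ω v ∧ (∫ x in Ω, v x ^ 2 ∂ν) = 1 ∧
    r = Qform m ν Ω lam fp u v}

/-!
The positive part `w = max u 0` lies in `L²₀(Ω_m, ν)`, and `Δ_m w · w ≥ 0` a.e., because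
`Δ_m w(x) ≥ Δ_m u(x) ≥ 0` wherever `w(x) > 0`. Reversibility makes `ν ⊗ m` invariant under
`(x, y) ↦ (y, x)`, which yields the summation by parts
`∬ (w(y) - w(x))² dm_x(y) dν(x) = -2 ∫ Δ_m w · w dν ≤ 0`.
So the Dirichlet energy of `w` is nonpositive, and the Poincaré inequality with `λ_m(Ω) > 0`
forces `w = 0` a.e. in `Ω`.
-/

open ProbabilityTheory
open scoped ENNReal

section RandomWalk

variable {X : Type*} [MeasurableSpace X]

lemma IsRandomWalk.exists_kernel {m : X → Measure X} (h : IsRandomWalk m) :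
    ∃ κ : Kernel X X, IsMarkovKernel κ ∧ ⇑κ = m :=
  ⟨⟨m, Measure.measurable_of_measurable_coe m h.2⟩, ⟨h.1⟩, rfl⟩

lemma deltaM_le_deltaM_max_zero {m : X → Measure X} {u : X → ℝ} {x : X} [IsFiniteMeasure (m x)]
    (hx : 0 < u x) (hu : Integrable u (m x)) :
    deltaM m u x ≤ deltaM m (fun y => max (u y) 0) x :=
  integral_mono (hu.sub (integrable_const _)) (hu.pos_part.sub (integrable_const _)) fun y => by
    simp only [max_eq_left hx.le]
    exact sub_le_sub_right (le_max_left _ _) _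

lemma MemL20.integrable_sq {m : X → Measure X} {ν : Measure X} {Ω : Set X} {w : X → ℝ}
    (hw : MemL20 m ν Ω w) : Integrable (fun x => w x ^ 2) ν :=
  IntegrableOn.integrable_of_forall_notMem_eq_zero hw.2.1.integrable_sq fun x hx => by
    simp [hw.2.2.2 x hx]

lemma Standing.ae_eq_zero_of_gradEnergy_nonpos {m : X → Measure X} {ν : Measure X} {Ω : Set X}
    {lam : ℝ} {φ : X → ℝ} {α M : ℝ} (hst : Standing m ν Ω lam φ α M) {w : X → ℝ}
    (hw : MemL20 m ν Ω w) (hE : gradEnergy m ν Ω w ≤ 0) : ∀ᵐ x ∂(ν.restrict Ω), w x = 0 := by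
  have hle : ∫ x in Ω, w x ^ 2 ∂ν ≤ 0 :=
    nonpos_of_mul_nonpos_right ((hst.hpoincare w hw).trans hE) hst.hlamPos
  have hzero := (integral_eq_zero_iff_of_nonneg (fun x => sq_nonneg (w x))
    hw.integrable_sq.integrableOn).1 (hle.antisymm (integral_nonneg fun x => sq_nonneg _))
  exact hzero.mono fun x hx => pow_eq_zero_iff two_ne_zero |>.1 hx

end RandomWalk

section Kernel

variable {X : Type*} [MeasurableSpace X] {κ : Kernel X X} {ν : Measure X}

lemma measurableSet_mBoundary {Ω : Set X} (hΩ : MeasurableSet Ω) :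
    MeasurableSet (mBoundary κ Ω) :=
  hΩ.compl.inter (measurableSet_lt measurable_const (κ.measurable_coe hΩ))

lemma measurableSet_mClosure {Ω : Set X} (hΩ : MeasurableSet Ω) : MeasurableSet (mClosure κ Ω) :=
  hΩ.union (measurableSet_mBoundary hΩ)

lemma setLIntegral_kernel_lt_top [IsFiniteKernel κ] {A : Set X} (hA : ν A ≠ ∞) (B : Set X) :
    ∫⁻ x in A, κ x B ∂ν < ∞ :=
  calc ∫⁻ x in A, κ x B ∂ν ≤ ∫⁻ _ in A, κ.bound ∂ν := lintegral_mono fun x => κ.measure_le_bound x B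
    _ < ∞ := by rw [setLIntegral_const]; exact ENNReal.mul_lt_top κ.bound_lt_top hA.lt_top

/- `Reversible` is phrased with Bochner integrals, which are junk on non-integrable functions,
so it only controls sets of finite measure. -/
lemma Reversible.setLIntegral_comm [IsFiniteKernel κ] (h : Reversible κ ν) {A B : Set X}
    (hA : MeasurableSet A) (hB : MeasurableSet B) (hνA : ν A ≠ ∞) (hνB : ν B ≠ ∞) :
    ∫⁻ x in A, κ x B ∂ν = ∫⁻ x in B, κ x A ∂ν := by
  have key := h (fun x y => A.indicator 1 x * B.indicator 1 y)
    (((measurable_one.indicator hA).comp measurable_fst).mul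
      ((measurable_one.indicator hB).comp measurable_snd))
    ⟨1, fun x y => by by_cases hx : x ∈ A <;> by_cases hy : y ∈ B <;> simp [hx, hy]⟩
  simp only [integral_const_mul, integral_mul_const, integral_indicator_one hA,
    integral_indicator_one hB] at key
  have toReal_eq {S T : Set X} (hS : MeasurableSet S) (hT : MeasurableSet T) :
      ∫ x, S.indicator 1 x * (κ x).real T ∂ν = (∫⁻ x in S, κ x T ∂ν).toReal := by
    rw [← integral_toReal (κ.measurable_coe hT).aemeasurable.restrict
      (ae_of_all _ fun x => measure_lt_top _ _), ← integral_indicator hS]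
    congr 1 with x
    by_cases hx : x ∈ S <;> simp [hx, measureReal_def]
  simp_rw [mul_comm _ (B.indicator 1 _), toReal_eq hA hB, toReal_eq hB hA] at key
  exact (ENNReal.toReal_eq_toReal_iff' (setLIntegral_kernel_lt_top hνA B).ne
    (setLIntegral_kernel_lt_top hνB A).ne).1 key

lemma Reversible.map_swap_compProd [IsFiniteKernel κ] [SigmaFinite ν] (h : Reversible κ ν) :
    (ν ⊗ₘ κ).map Prod.swap = ν ⊗ₘ κ := by
  have hS n : MeasurableSet (spanningSets ν n) := measurableSet_spanningSets ν n
  have hνS {n} {s : Set X} : ν (s ∩ spanningSets ν n) ≠ ∞ :=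
    (measure_mono_top inter_subset_right |>.mt (measure_spanningSets_lt_top ν n).ne)
  refine Measure.ext_of_iUnion_eq_univ (s := fun n => spanningSets ν n ×ˢ spanningSets ν n) ?_
    fun n => ?_
  · rw [iUnion_prod_of_monotone (monotone_spanningSets ν) (monotone_spanningSets ν),
      iUnion_spanningSets, univ_prod_univ]
  · have : IsFiniteMeasure ((ν ⊗ₘ κ).restrict (spanningSets ν n ×ˢ spanningSets ν n)) :=
      isFiniteMeasure_restrict.2 <| by
        rw [Measure.compProd_apply_prod (hS n) (hS n)]
        exact (setLIntegral_kernel_lt_top (measure_spanningSets_lt_top ν n).ne _).ne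
    refine (Measure.ext_prod fun {s t} hs ht => ?_).symm
    have hs' := hs.inter (hS n)
    have ht' := ht.inter (hS n)
    rw [Measure.restrict_apply (hs.prod ht), Measure.restrict_apply (hs.prod ht), prod_inter_prod,
      Measure.map_apply measurable_swap (hs'.prod ht'), preimage_swap_prod,
      Measure.compProd_apply_prod hs' ht', Measure.compProd_apply_prod ht' hs']
    exact h.setLIntegral_comm hs' ht' hνS hνS

end Kernel

section SymmetricCompProd

variable {X : Type*} [MeasurableSpace X] {κ : Kernel X X} [IsMarkovKernel κ] {ν : Measure X}
  [SFinite ν] {w : X → ℝ}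

lemma comp_eq_of_map_swap_compProd (h : (ν ⊗ₘ κ).map Prod.swap = ν ⊗ₘ κ) : κ ∘ₘ ν = ν := by
  rw [← Measure.snd_compProd, ← Measure.fst_map_swap, h, Measure.fst_compProd]

lemma integrable_sq_fst_add_sq_snd (h : (ν ⊗ₘ κ).map Prod.swap = ν ⊗ₘ κ) (hw : Measurable w)
    (hw2 : Integrable (fun x => w x ^ 2) ν) :
    Integrable (fun p : X × X => w p.1 ^ 2 + w p.2 ^ 2) (ν ⊗ₘ κ) := by
  have hsnd : Integrable (fun p : X × X => w p.2 ^ 2) (ν ⊗ₘ κ) :=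
    (Measure.integrable_compProd_snd_iff (hw.pow_const 2).aestronglyMeasurable).2
      ((comp_eq_of_map_swap_compProd h).symm ▸ hw2)
  have hfst : Integrable (fun p : X × X => w p.1 ^ 2) (ν ⊗ₘ κ) :=
    (h.symm ▸ hsnd).comp_measurable measurable_swap
  exact hfst.add hsnd

lemma integral_sq_sub_eq_neg_two_mul (h : (ν ⊗ₘ κ).map Prod.swap = ν ⊗ₘ κ) (hw : Measurable w)
    (hw2 : Integrable (fun x => w x ^ 2) ν) :
    ∫ p, (w p.2 - w p.1) ^ 2 ∂(ν ⊗ₘ κ) = -2 * ∫ x, deltaM κ w x * w x ∂ν := by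
  set a : X × X → ℝ := fun p => (w p.2 - w p.1) * w p.1
  have ha : Integrable a (ν ⊗ₘ κ) := by
    refine (integrable_sq_fst_add_sq_snd h hw hw2).const_mul 2 |>.mono'
      ((hw.comp measurable_snd).sub (hw.comp measurable_fst) |>.mul
        (hw.comp measurable_fst)).aestronglyMeasurable (ae_of_all _ fun p => ?_)
    rw [Real.norm_eq_abs, abs_le]
    constructor <;> nlinarith [sq_nonneg (w p.1 + w p.2), sq_nonneg (w p.1 - w p.2)]
  have ha_swap : ∫ p, a p.swap ∂(ν ⊗ₘ κ) = ∫ p, a p ∂(ν ⊗ₘ κ) :=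
    MeasurePreserving.integral_comp' (f := MeasurableEquiv.prodComm) ⟨measurable_swap, h⟩ a
  calc ∫ p, (w p.2 - w p.1) ^ 2 ∂(ν ⊗ₘ κ) = ∫ p, (-a p.swap - a p) ∂(ν ⊗ₘ κ) := by
        congr 1 with p; simp only [a, Prod.fst_swap, Prod.snd_swap]; ring
    _ = -2 * ∫ p, a p ∂(ν ⊗ₘ κ) := by
        have ha_swap_int : Integrable (fun p => -a p.swap) (ν ⊗ₘ κ) :=
          ((h.symm ▸ ha).comp_measurable measurable_swap).neg
        rw [integral_sub ha_swap_int ha, integral_neg, ha_swap]; ring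
    _ = -2 * ∫ x, deltaM κ w x * w x ∂ν := by
        rw [Measure.integral_compProd ha]; simp only [a, integral_mul_const, deltaM]

lemma gradEnergy_le_neg_integral_deltaM_mul {Ω : Set X} (h : (ν ⊗ₘ κ).map Prod.swap = ν ⊗ₘ κ)
    (hΩ : MeasurableSet (mClosure κ Ω)) (hw : Measurable w)
    (hw2 : Integrable (fun x => w x ^ 2) ν) :
    gradEnergy κ ν Ω w ≤ -∫ x, deltaM κ w x * w x ∂ν := by
  have hint : Integrable (fun p : X × X => (w p.2 - w p.1) ^ 2) (ν ⊗ₘ κ) := by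
    refine (integrable_sq_fst_add_sq_snd h hw hw2).const_mul 2 |>.mono'
      ((hw.comp measurable_snd).sub (hw.comp measurable_fst) |>.pow_const 2).aestronglyMeasurable
      (ae_of_all _ fun p => ?_)
    rw [Real.norm_eq_abs, abs_of_nonneg (sq_nonneg _)]
    nlinarith [sq_nonneg (w p.1 + w p.2)]
  calc gradEnergy κ ν Ω w
      = 1 / 2 * ∫ p in mClosure κ Ω ×ˢ mClosure κ Ω, (w p.2 - w p.1) ^ 2 ∂(ν ⊗ₘ κ) := by
        rw [Measure.setIntegral_compProd hΩ hΩ hint.integrableOn]; rfl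
    _ ≤ 1 / 2 * ∫ p, (w p.2 - w p.1) ^ 2 ∂(ν ⊗ₘ κ) :=
        mul_le_mul_of_nonneg_left
          (setIntegral_le_integral hint (ae_of_all _ fun p => sq_nonneg _)) (by norm_num)
    _ = -∫ x, deltaM κ w x * w x ∂ν := by
        rw [integral_sq_sub_eq_neg_two_mul h hw hw2]; ring

lemma ae_deltaM_max_zero_mul_nonneg {Ω : Set X} {u : X → ℝ}
    (h : (ν ⊗ₘ κ).map Prod.swap = ν ⊗ₘ κ) (hΩ : MeasurableSet Ω) (hu : Integrable u ν)
    (hu0 : ∀ x ∉ mClosure κ Ω, u x = 0) (hsub : ∀ᵐ x ∂(ν.restrict Ω), 0 ≤ deltaM κ u x)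
    (hbdry : ∀ᵐ x ∂(ν.restrict (mBoundary κ Ω)), u x ≤ 0) :
    ∀ᵐ x ∂ν, 0 ≤ deltaM κ (fun y => max (u y) 0) x * max (u x) 0 := by
  have hint : ∀ᵐ x ∂ν, Integrable u (κ x) :=
    Measure.ae_integrable_of_integrable_comp ((comp_eq_of_map_swap_compProd h).symm ▸ hu)
  filter_upwards [hint, (ae_restrict_iff' hΩ).1 hsub,
    (ae_restrict_iff' (measurableSet_mBoundary hΩ)).1 hbdry] with x hint hsub hbdry
  rcases le_or_gt (u x) 0 with hx | hx
  · simp [max_eq_right hx]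
  · have hxΩ : x ∈ Ω := by
      by_contra hxΩ
      by_cases hxB : x ∈ mBoundary κ Ω
      · exact (hbdry hxB).not_gt hx
      · exact hx.ne' (hu0 x (by simp [mClosure, hxΩ, hxB]))
    exact mul_nonneg ((hsub hxΩ).trans (deltaM_le_deltaM_max_zero hx hint)) (le_max_right _ _)

end SymmetricCompProd

theorem maximum_principle_general
    {X : Type*} [MeasurableSpace X]
    (m : X → MeasureTheory.Measure X) (ν : MeasureTheory.Measure X)
    (Ω : Set X) (lam : ℝ) (φ : X → ℝ) (α M : ℝ)
    (hst : Standing m ν Ω lam φ α M)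
    (u : X → ℝ) (hu : Measurable u)
    (huL2 : MeasureTheory.MemLp u 2 (ν.restrict (mClosure m Ω)))
    (hu0 : ∀ x ∉ mClosure m Ω, u x = 0)
    (hsub : ∀ᵐ x ∂(ν.restrict Ω), -(deltaM m u x) ≤ 0)
    (hbdry : ∀ᵐ x ∂(ν.restrict (mBoundary m Ω)), u x ≤ 0) :
    ∀ᵐ x ∂(ν.restrict (mClosure m Ω)), u x ≤ 0 := by
  obtain ⟨κ, _, rfl⟩ := hst.hrw.exists_kernel
  have := hst.hsigma
  have hswap := hst.hrev.map_swap_compProd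
  have : IsFiniteMeasure (ν.restrict (mClosure κ Ω)) := isFiniteMeasure_restrict.2 hst.hfin.ne
  have hu1 : Integrable u ν :=
    IntegrableOn.integrable_of_forall_notMem_eq_zero (huL2.integrable one_le_two) hu0
  set w := fun x => max (u x) 0
  have hw : MemL20 κ ν Ω w :=
    ⟨hu.max measurable_const, huL2.pos_part, hbdry.mono fun x hx => max_eq_right hx, fun x hx => by simp [w, hu0 x hx]⟩
  have hE : gradEnergy κ ν Ω w ≤ 0 :=
    (gradEnergy_le_neg_integral_deltaM_mul hswap (measurableSet_mClosure hst.hmeasΩ) hw.1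
      hw.integrable_sq).trans <| neg_nonpos.2 <| integral_nonneg_of_ae <|
        ae_deltaM_max_zero_mul_nonneg hswap hst.hmeasΩ hu1 hu0
          (hsub.mono fun x hx => neg_nonpos.1 hx) hbdry
  refine (ae_restrict_union_iff _ _ _).2 ⟨?_, hbdry⟩
  exact (hst.ae_eq_zero_of_gradEnergy_nonpos hw hE).mono fun x hx => max_eq_right_iff.1 hx

/-- **Maximum Principle**: under the standing assumptions, if `u ∈ L²(Ω_m, ν)` satisfies
`−Δ_m u ≤ 0` `ν`-a.e. in `Ω` and `u ≤ 0` `ν`-a.e. on `∂_mΩ`, then `u ≤ 0` `ν`-a.e. in `Ω_m`. -/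
theorem maximum_principle
    {X : Type*} [MeasurableSpace X] [MeasurableSpace.CountablyGenerated X]
    (m : X → MeasureTheory.Measure X) (ν : MeasureTheory.Measure X)
    (Ω : Set X) (lam : ℝ) (φ : X → ℝ) (α M : ℝ)
    (hst : Standing m ν Ω lam φ α M)
    (u : X → ℝ) (hu : Measurable u)
    (huL2 : MeasureTheory.MemLp u 2 (ν.restrict (mClosure m Ω)))
    (hu0 : ∀ x ∉ mClosure m Ω, u x = 0)
    (hsub : ∀ᵐ x ∂(ν.restrict Ω), -(deltaM m u x) ≤ 0)
    (hbdry : ∀ᵐ x ∂(ν.restrict (mBoundary m Ω)), u x ≤ 0) :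
    ∀ᵐ x ∂(ν.restrict (mClosure m Ω)), u x ≤ 0 :=
  maximum_principle_general m ν Ω lam φ α M hst u hu huL2 hu0 hsub hbdry
end

section
/- Sub- and supersolution method: Under the standing assumptions, let g ∈ C¹(ℝ) and let ŭ and ū be L∞-bounded subsolution and supersolution, respectively, of (P(g)) with ŭ ≤ ū ν-a.e. Define the truncation h(x,r) := g(ŭ(x)) if r < ŭ(x), h(x,r) := g(r) if ŭ(x) ≤ r ≤ ū(x), and h(x,r) := g(ū(x)) if r > ū(x). Then the problem (P(h)) has a solution u. Moreover, if g is non-decreasing, then ŭ ≤ u ≤ ū ν-a.e. and u is a solution of (P(g)). -/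
open MeasureTheory Set

open Filter Topology
open scoped NNReal ENNReal

/-!
Since `-Δ_m u(x) = u(x) - ∫ u dm_x`, a solution is a fixed point of
`T u(x) = (∫ u dm_x + g(u(x)) + K u(x)) / (1 + K)` on `Ω` (and `T u = 0` off `Ω`). If `K` is a
Lipschitz constant of `g` on an interval containing the values of `ŭ` and `ū`, then `T` is order
preserving between `ŭ` and `ū`, and `ŭ ≤ T ŭ`, `T ū ≤ ū` are exactly the sub- and supersolution
inequalities. So the iterates `Tⁿ ŭ` increase and stay below `ū`; by dominated convergence their
limit is a fixed point `u` with `ŭ ≤ u ≤ ū`, on which the truncation is inactive. Reversibility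
makes `ν`-null sets `m_x`-null for `ν`-a.e. `x ∈ Ω`, which lets a.e. inequalities pass under
`∫ dm_x`.
-/

lemma LipschitzOnWith.monotoneOn_add_mul {g : ℝ → ℝ} {K : ℝ≥0} {s : Set ℝ}
    (hg : LipschitzOnWith K g s) : MonotoneOn (fun t ↦ g t + K * t) s := by
  intro x hx y hy hxy
  have h := hg.dist_le_mul x hx y hy
  rw [Real.dist_eq, Real.dist_eq, abs_sub_comm x y, abs_of_nonneg (sub_nonneg.2 hxy)] at h
  linarith [le_abs_self (g x - g y)]

lemma integrable_of_ae_mem_Icc {X : Type*} [MeasurableSpace X] {μ : Measure X}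
    [IsFiniteMeasure μ] {f : X → ℝ} {c d : ℝ} (hf : AEStronglyMeasurable f μ)
    (h : ∀ᵐ x ∂μ, f x ∈ Icc c d) : Integrable f μ :=
  integrable_of_le_of_le hf (h.mono fun _ hx ↦ hx.1) (h.mono fun _ hx ↦ hx.2)
    (integrable_const c) (integrable_const d)

lemma ae_mem_Icc_of_ae_le {X : Type*} [MeasurableSpace X] {ν : Measure X} {a b v : X → ℝ}
    {c d : ℝ} (ha : ∀ x, a x ∈ Icc c d) (hb : ∀ x, b x ∈ Icc c d) (hav : a ≤ᵐ[ν] v)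
    (hvb : v ≤ᵐ[ν] b) : ∀ᵐ x ∂ν, v x ∈ Icc c d := by
  filter_upwards [hav, hvb] with x h₁ h₂
  exact ⟨(ha x).1.trans h₁, h₂.trans (hb x).2⟩

section MonotoneIteration

variable {X : Type*} [MeasurableSpace X] {ν : Measure X}

def AEMonotoneBetween (ν : Measure X) (a b : X → ℝ) (T : (X → ℝ) → X → ℝ) : Prop :=
  ∀ v w, Measurable v → Measurable w → a ≤ᵐ[ν] v → v ≤ᵐ[ν] w → w ≤ᵐ[ν] b → T v ≤ᵐ[ν] T w

variable {T : (X → ℝ) → X → ℝ} {a b : X → ℝ} {v : ℕ → X → ℝ}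

lemma AEMonotoneBetween.ae_le_succ (hT : AEMonotoneBetween ν a b T) (hb : Measurable b)
    (hab : a ≤ᵐ[ν] b) (haT : a ≤ᵐ[ν] T a) (hTb : T b ≤ᵐ[ν] b) (hv : ∀ n, Measurable (v n))
    (hv_zero : v 0 = a) (hv_succ : ∀ n, v (n + 1) = T (v n)) (n : ℕ) :
    a ≤ᵐ[ν] v n ∧ v n ≤ᵐ[ν] v (n + 1) ∧ v (n + 1) ≤ᵐ[ν] b := by
  induction n with
  | zero =>
    subst hv_zero
    exact ⟨EventuallyLE.rfl, hv_succ 0 ▸ haT,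
      hv_succ 0 ▸ (hT _ b (hv 0) hb EventuallyLE.rfl hab EventuallyLE.rfl).trans hTb⟩
  | succ n ih =>
    obtain ⟨ha_le, hle_succ, hsucc_le⟩ := ih
    have ha_le_succ := ha_le.trans hle_succ
    refine ⟨ha_le_succ, ?_, ?_⟩
    · have := hT _ _ (hv n) (hv (n + 1)) ha_le hle_succ hsucc_le
      rwa [← hv_succ, ← hv_succ] at this
    · rw [hv_succ (n + 1)]
      exact (hT _ b (hv (n + 1)) hb ha_le_succ hsucc_le EventuallyLE.rfl).trans hTb

/-- Taking the fixed point in the range of `T` lets it inherit pointwise properties of the values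
of `T`. -/
theorem AEMonotoneBetween.exists_ae_fixedPoint (hT : AEMonotoneBetween ν a b T)
    (hT_meas : ∀ v, Measurable v → Measurable (T v)) (ha : Measurable a) (hb : Measurable b)
    (hT_tendsto : ∀ (v : ℕ → X → ℝ) (u : X → ℝ), (∀ n, Measurable (v n)) → Measurable u →
      (∀ n, a ≤ᵐ[ν] v n) → (∀ n, v n ≤ᵐ[ν] b) →
      (∀ᵐ x ∂ν, Tendsto (fun n ↦ v n x) atTop (𝓝 (u x))) →
      ∀ᵐ x ∂ν, Tendsto (fun n ↦ T (v n) x) atTop (𝓝 (T u x)))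
    (hab : a ≤ᵐ[ν] b) (haT : a ≤ᵐ[ν] T a) (hTb : T b ≤ᵐ[ν] b) :
    ∃ u ∈ range T, Measurable u ∧ a ≤ᵐ[ν] u ∧ u ≤ᵐ[ν] b ∧ T u =ᵐ[ν] u := by
  set v : ℕ → X → ℝ := fun n ↦ T^[n] a
  have hv_succ (n : ℕ) : v (n + 1) = T (v n) := Function.iterate_succ_apply' T n a
  have hv : ∀ n, Measurable (v n) := fun n ↦ by
    induction n with
    | zero => exact ha
    | succ n ih => rw [hv_succ]; exact hT_meas _ ih
  have hchain := hT.ae_le_succ hb hab haT hTb hv rfl hv_succ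
  have hmono : ∀ᵐ x ∂ν, Monotone (fun n ↦ v n x) ∧ ∀ n, v n x ≤ b x := by
    filter_upwards [ae_all_iff.2 fun n ↦ (hchain n).2.1, ae_all_iff.2 fun n ↦ (hchain n).2.2,
      hab] with x hsucc hle hab
    refine ⟨monotone_nat_of_le_succ hsucc, fun n ↦ ?_⟩
    cases n with
    | zero => exact hab
    | succ n => exact hle n
  set u : X → ℝ := fun x ↦ ⨆ n, v n x
  have hu : Measurable u := Measurable.iSup hv
  have hlim : ∀ᵐ x ∂ν, Tendsto (fun n ↦ v n x) atTop (𝓝 (u x)) := by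
    filter_upwards [hmono] with x ⟨hmono, hle⟩
    exact tendsto_atTop_ciSup hmono ⟨b x, forall_mem_range.2 hle⟩
  have hau : a ≤ᵐ[ν] u := by
    filter_upwards [hmono, hlim] with x ⟨hmono, _⟩ hx
    exact hmono.ge_of_tendsto hx 0
  have hub : u ≤ᵐ[ν] b := by
    filter_upwards [hmono, hlim] with x ⟨_, hle⟩ hx
    exact le_of_tendsto' hx hle
  have hfix : T u =ᵐ[ν] u := by
    filter_upwards [hT_tendsto v u hv hu (fun n ↦ (hchain n).1)
      (fun n ↦ (hchain n).2.1.trans (hchain n).2.2) hlim, hlim] with x hTx hx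
    refine tendsto_nhds_unique hTx ?_
    simpa only [Function.comp_def, hv_succ] using hx.comp (tendsto_add_atTop_nat 1)
  have hTTu : T (T u) =ᵐ[ν] T u := by
    have h₁ := hT _ _ (hT_meas u hu) hu (hau.trans hfix.symm.le) hfix.le hub
    have h₂ := hT _ _ hu (hT_meas u hu) hau hfix.symm.le (hfix.le.trans hub)
    exact h₁.antisymm h₂
  exact ⟨T u, mem_range_self u, hT_meas u hu, hau.trans hfix.symm.le, hfix.le.trans hub, hTTu⟩

end MonotoneIteration

section RandomWalk

variable {X : Type*} [MeasurableSpace X] {m : X → Measure X} {ν : Measure X} {Ω : Set X}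

lemma IsRandomWalk.measurable_integral (hm : IsRandomWalk m) {v : X → ℝ} (hv : Measurable v) :
    Measurable fun x ↦ ∫ y, v y ∂m x :=
  let κ : ProbabilityTheory.Kernel X X := ⟨m, Measure.measurable_of_measurable_coe m hm.2⟩
  (hv.stronglyMeasurable.integral_kernel (κ := κ)).measurable

lemma IsRandomWalk.measurableSet_mBoundary (hm : IsRandomWalk m) (hΩ : MeasurableSet Ω) :
    MeasurableSet (mBoundary m Ω) :=
  hΩ.compl.inter (measurableSet_lt measurable_const (hm.2 Ω hΩ))

lemma deltaM_eq_integral_sub {v : X → ℝ} {x : X} [IsProbabilityMeasure (m x)]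
    (hv : Integrable v (m x)) : deltaM m v x = ∫ y, v y ∂m x - v x := by
  rw [deltaM, integral_sub hv (integrable_const _), integral_const, probReal_univ, one_smul]

theorem Reversible.ae_restrict_ae_of_ae (hrev : Reversible m ν) (hm : IsRandomWalk m)
    (hΩ : MeasurableSet Ω) (hνΩ : ν Ω ≠ ∞) ⦃p : X → Prop⦄ (hp : ∀ᵐ y ∂ν, p y) :
    ∀ᵐ x ∂ν.restrict Ω, ∀ᵐ y ∂m x, p y := by
  have := hm.1
  have : IsFiniteMeasure (ν.restrict Ω) := isFiniteMeasure_restrict.2 hνΩ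
  set N := toMeasurable ν {y | ¬p y}
  have hN : MeasurableSet N := measurableSet_toMeasurable _ _
  have hνN : ν N = 0 := (measure_toMeasurable _).trans hp
  have hrevN := hrev (fun x y ↦ Ω.indicator 1 x * N.indicator 1 y)
    (((measurable_one.indicator hΩ).comp measurable_fst).mul
      ((measurable_one.indicator hN).comp measurable_snd))
    ⟨1, fun x y ↦ ?_⟩
  · simp only [integral_const_mul, integral_mul_const, integral_indicator_one hN,
      integral_indicator_one hΩ] at hrevN
    have hrhs : ∫ x, (m x).real Ω * N.indicator 1 x ∂ν = 0 :=
      integral_eq_zero_of_ae <| (measure_eq_zero_iff_ae_notMem.1 hνN).mono fun x hx ↦ by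
        simp [indicator_of_notMem hx]
    have hind (x : X) :
        Ω.indicator 1 x * (m x).real N = Ω.indicator (fun x ↦ (m x).real N) x := by
      by_cases hx : x ∈ Ω <;> simp [hx]
    simp only [hind, integral_indicator hΩ, hrhs] at hrevN
    have h0 : ∀ᵐ x ∂ν.restrict Ω, (m x).real N = 0 := by
      refine (integral_eq_zero_iff_of_nonneg (fun _ ↦ measureReal_nonneg) ?_).1 hrevN
      refine .of_bound (hm.2 N hN).ennreal_toReal.aestronglyMeasurable 1 (ae_of_all _ fun x ↦ ?_)
      simp [abs_of_nonneg measureReal_nonneg]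
    filter_upwards [h0] with x hx
    exact measure_mono_null (subset_toMeasurable _ _) ((measureReal_eq_zero_iff).1 hx)
  · by_cases hx : x ∈ Ω <;> by_cases hy : y ∈ N <;> simp [hx, hy]

end RandomWalk

section MBoundary

variable {X : Type*} [MeasurableSpace X] {m : X → Measure X} {ν : Measure X} {Ω : Set X}

lemma ae_of_ae_restrict_mClosure (hm : IsRandomWalk m) (hΩ : MeasurableSet Ω) {p : X → Prop}
    (h : ∀ᵐ x ∂ν.restrict (mClosure m Ω), p x) (hext : ∀ x ∉ mClosure m Ω, p x) :
    ∀ᵐ x ∂ν, p x := by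
  filter_upwards [(ae_restrict_iff' (hΩ.union (hm.measurableSet_mBoundary hΩ))).1 h] with x hx
  by_cases hxcl : x ∈ mClosure m Ω
  exacts [hx hxcl, hext x hxcl]

lemma ae_notMem_imp_of_ae_restrict_mBoundary (hm : IsRandomWalk m) (hΩ : MeasurableSet Ω)
    {p : X → Prop} (h : ∀ᵐ x ∂ν.restrict (mBoundary m Ω), p x)
    (hext : ∀ x ∉ mClosure m Ω, p x) : ∀ᵐ x ∂ν, x ∉ Ω → p x := by
  filter_upwards [(ae_restrict_iff' (hm.measurableSet_mBoundary hΩ)).1 h] with x hx hxΩ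
  by_cases hxB : x ∈ mBoundary m Ω
  exacts [hx hxB, hext x fun hxcl ↦ hxcl.elim hxΩ hxB]

lemma memL20_of_ae_mem_Icc (hm : IsRandomWalk m) (hΩ : MeasurableSet Ω)
    (hfin : ν (mClosure m Ω) ≠ ∞) {u : X → ℝ} {c d : ℝ} (hu : Measurable u)
    (huC : ∀ᵐ x ∂ν, u x ∈ Icc c d) (hu0 : ∀ x ∉ Ω, u x = 0) : MemL20 m ν Ω u := by
  have : IsFiniteMeasure (ν.restrict (mClosure m Ω)) := isFiniteMeasure_restrict.2 hfin
  refine ⟨hu, .of_bound hu.aestronglyMeasurable (max |c| |d|) ?_,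
    ae_restrict_of_forall_mem (hm.measurableSet_mBoundary hΩ) fun x hx ↦ hu0 x hx.1,
    fun x hx ↦ hu0 x fun hxΩ ↦ hx (Or.inl hxΩ)⟩
  filter_upwards [ae_restrict_of_ae huC] with x hx
  exact abs_le_max_abs_abs hx.1 hx.2

end MBoundary

section PicardMap

variable {X : Type*} [MeasurableSpace X] {m : X → Measure X} {ν : Measure X} {Ω : Set X}
  {g : ℝ → ℝ} {K : ℝ≥0}

noncomputable def picardMap (m : X → Measure X) (Ω : Set X) (g : ℝ → ℝ) (K : ℝ≥0)
    (v : X → ℝ) : X → ℝ :=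
  Ω.indicator fun x ↦ (∫ y, v y ∂m x + g (v x) + K * v x) / (1 + K)

lemma picardMap_sub_self {v : X → ℝ} {x : X} [IsProbabilityMeasure (m x)] (hx : x ∈ Ω)
    (hv : Integrable v (m x)) :
    picardMap m Ω g K v x - v x = (deltaM m v x + g (v x)) / (1 + K) := by
  rw [picardMap, indicator_of_mem hx, deltaM_eq_integral_sub hv]
  field_simp
  ring

lemma measurable_picardMap (hm : IsRandomWalk m) (hΩ : MeasurableSet Ω) (hg : Measurable g)
    {v : X → ℝ} (hv : Measurable v) : Measurable (picardMap m Ω g K v) :=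
  ((((hm.measurable_integral hv).add (hg.comp hv)).add (hv.const_mul _)).div_const _).indicator hΩ

lemma aeMonotoneBetween_picardMap
    (hmν : ∀ ⦃p : X → Prop⦄, (∀ᵐ y ∂ν, p y) → ∀ᵐ x ∂ν.restrict Ω, ∀ᵐ y ∂m x, p y)
    [∀ x, IsProbabilityMeasure (m x)] (hΩ : MeasurableSet Ω) {c d : ℝ}
    (hg : LipschitzOnWith K g (Icc c d)) {a b : X → ℝ} (ha : ∀ x, a x ∈ Icc c d)
    (hb : ∀ x, b x ∈ Icc c d) : AEMonotoneBetween ν a b (picardMap m Ω g K) := by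
  intro v w hv hw hav hvw hwb
  have hvwC : ∀ᵐ y ∂ν, v y ∈ Icc c d ∧ w y ∈ Icc c d ∧ v y ≤ w y := by
    filter_upwards [ae_mem_Icc_of_ae_le ha hb hav (hvw.trans hwb),
      ae_mem_Icc_of_ae_le ha hb (hav.trans hvw) hwb, hvw] with y h₁ h₂ h₃
    exact ⟨h₁, h₂, h₃⟩
  filter_upwards [(ae_restrict_iff' hΩ).1 (hmν hvwC), hvwC] with x hxm ⟨hvx, hwx, hx⟩
  by_cases hxΩ : x ∈ Ω
  · have hxm := hxm hxΩ
    have hPvw : ∫ y, v y ∂m x ≤ ∫ y, w y ∂m x :=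
      integral_mono_ae (integrable_of_ae_mem_Icc hv.aestronglyMeasurable (hxm.mono fun _ h ↦ h.1))
        (integrable_of_ae_mem_Icc hw.aestronglyMeasurable (hxm.mono fun _ h ↦ h.2.1))
        (hxm.mono fun _ h ↦ h.2.2)
    have hgK := hg.monotoneOn_add_mul hvx hwx hx
    simp only [picardMap, indicator_of_mem hxΩ]
    gcongr ?_ / _
    linarith
  · simp [picardMap, hxΩ]

lemma tendsto_picardMap
    (hmν : ∀ ⦃p : X → Prop⦄, (∀ᵐ y ∂ν, p y) → ∀ᵐ x ∂ν.restrict Ω, ∀ᵐ y ∂m x, p y)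
    [∀ x, IsProbabilityMeasure (m x)] (hΩ : MeasurableSet Ω) (hg : Continuous g) {c d : ℝ}
    {v : ℕ → X → ℝ} {u : X → ℝ} (hv : ∀ n, Measurable (v n))
    (hvC : ∀ n, ∀ᵐ x ∂ν, v n x ∈ Icc c d) (hlim : ∀ᵐ x ∂ν, Tendsto (v · x) atTop (𝓝 (u x))) :
    ∀ᵐ x ∂ν, Tendsto (fun n ↦ picardMap m Ω g K (v n) x) atTop (𝓝 (picardMap m Ω g K u x)) := by
  have hP : ∀ᵐ x ∂ν.restrict Ω,
      Tendsto (fun n ↦ ∫ y, v n y ∂m x) atTop (𝓝 (∫ y, u y ∂m x)) := by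
    filter_upwards [hmν (ae_all_iff.2 hvC), hmν hlim] with x hxC hxlim
    refine tendsto_integral_of_dominated_convergence (fun _ ↦ max |c| |d|)
      (fun n ↦ (hv n).aestronglyMeasurable) (integrable_const _) (fun n ↦ ?_) hxlim
    filter_upwards [hxC] with y hy
    exact abs_le_max_abs_abs (hy n).1 (hy n).2
  filter_upwards [(ae_restrict_iff' hΩ).1 hP, hlim] with x hxP hx
  by_cases hxΩ : x ∈ Ω
  · simp only [picardMap, indicator_of_mem hxΩ]
    exact (((hxP hxΩ).add ((hg.tendsto _).comp hx)).add (hx.const_mul _)).div_const _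
  · simp only [picardMap, indicator_of_notMem hxΩ]
    exact tendsto_const_nhds

lemma ae_le_picardMap [∀ x, IsProbabilityMeasure (m x)] (hΩ : MeasurableSet Ω) {v : X → ℝ}
    (hv : ∀ x, Integrable v (m x)) (hsub : ∀ᵐ x ∂ν.restrict Ω, -deltaM m v x ≤ g (v x))
    (hout : ∀ᵐ x ∂ν, x ∉ Ω → v x ≤ 0) : v ≤ᵐ[ν] picardMap m Ω g K v := by
  filter_upwards [(ae_restrict_iff' hΩ).1 hsub, hout] with x hx hx'
  by_cases hxΩ : x ∈ Ω
  · have h := picardMap_sub_self (g := g) (K := K) hxΩ (hv x)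
    have : 0 ≤ (deltaM m v x + g (v x)) / (1 + K) :=
      div_nonneg (by linarith [hx hxΩ]) (by positivity)
    linarith
  · simpa [picardMap, hxΩ] using hx' hxΩ

lemma picardMap_ae_le [∀ x, IsProbabilityMeasure (m x)] (hΩ : MeasurableSet Ω) {v : X → ℝ}
    (hv : ∀ x, Integrable v (m x)) (hsup : ∀ᵐ x ∂ν.restrict Ω, g (v x) ≤ -deltaM m v x)
    (hout : ∀ᵐ x ∂ν, x ∉ Ω → 0 ≤ v x) : picardMap m Ω g K v ≤ᵐ[ν] v := by
  filter_upwards [(ae_restrict_iff' hΩ).1 hsup, hout] with x hx hx'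
  by_cases hxΩ : x ∈ Ω
  · have h := picardMap_sub_self (g := g) (K := K) hxΩ (hv x)
    have : (deltaM m v x + g (v x)) / (1 + K) ≤ 0 :=
      div_nonpos_of_nonpos_of_nonneg (by linarith [hx hxΩ]) (by positivity)
    linarith
  · simpa [picardMap, hxΩ] using hx' hxΩ

lemma ae_neg_deltaM_eq_of_picardMap_eq
    (hmν : ∀ ⦃p : X → Prop⦄, (∀ᵐ y ∂ν, p y) → ∀ᵐ x ∂ν.restrict Ω, ∀ᵐ y ∂m x, p y)
    [∀ x, IsProbabilityMeasure (m x)] (hΩ : MeasurableSet Ω) {u : X → ℝ} {c d : ℝ}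
    (hu : Measurable u) (huC : ∀ᵐ x ∂ν, u x ∈ Icc c d) (hfix : picardMap m Ω g K u =ᵐ[ν] u) :
    ∀ᵐ x ∂ν.restrict Ω, -deltaM m u x = g (u x) := by
  filter_upwards [hmν huC, ae_restrict_of_ae hfix, ae_restrict_mem hΩ] with x hxC hx hxΩ
  have h := picardMap_sub_self (g := g) (K := K) hxΩ
    (integrable_of_ae_mem_Icc hu.aestronglyMeasurable hxC)
  rw [hx, sub_self, eq_comm, div_eq_zero_iff] at h
  have : (1 + K : ℝ) ≠ 0 := by positivity
  linarith [h.resolve_right this]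

end PicardMap

theorem sub_supersolution_method_general
    {X : Type*} [MeasurableSpace X]
    (m : X → MeasureTheory.Measure X) (ν : MeasureTheory.Measure X)
    (Ω : Set X) (lam : ℝ) (φ : X → ℝ) (α M : ℝ)
    (hst : Standing m ν Ω lam φ α M)
    (g : ℝ → ℝ) (hg : ContDiff ℝ 1 g)
    (usub usup : X → ℝ)
    (hsubMeas : Measurable usub)
    (hsubExt : ∀ x ∉ mClosure m Ω, usub x = 0)
    (hsubBdd : ∃ C, ∀ x, |usub x| ≤ C)
    (hsubIneq : ∀ᵐ x ∂(ν.restrict Ω), -(deltaM m usub x) ≤ g (usub x))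
    (hsubBdry : ∀ᵐ x ∂(ν.restrict (mBoundary m Ω)), usub x ≤ 0)
    (hsupMeas : Measurable usup)
    (hsupExt : ∀ x ∉ mClosure m Ω, usup x = 0)
    (hsupBdd : ∃ C, ∀ x, |usup x| ≤ C)
    (hsupIneq : ∀ᵐ x ∂(ν.restrict Ω), g (usup x) ≤ -(deltaM m usup x))
    (hsupBdry : ∀ᵐ x ∂(ν.restrict (mBoundary m Ω)), 0 ≤ usup x)
    (hle : ∀ᵐ x ∂(ν.restrict (mClosure m Ω)), usub x ≤ usup x) :
    (∃ u : X → ℝ, MemL20 m ν Ω u ∧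
      ∀ᵐ x ∂(ν.restrict Ω), -(deltaM m u x) =
        (if u x < usub x then g (usub x)
         else if u x ≤ usup x then g (u x) else g (usup x))) ∧
    (Monotone g → ∃ u : X → ℝ, MemL20 m ν Ω u ∧
      (∀ᵐ x ∂(ν.restrict (mClosure m Ω)), usub x ≤ u x ∧ u x ≤ usup x) ∧
      ∀ᵐ x ∂(ν.restrict Ω), -(deltaM m u x) = g (u x)) := by
  obtain ⟨C₁, hC₁⟩ := hsubBdd
  obtain ⟨C₂, hC₂⟩ := hsupBdd
  set I := Icc (-max C₁ C₂) (max C₁ C₂)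
  have hsubI (x : X) : usub x ∈ I := abs_le.1 ((hC₁ x).trans (le_max_left _ _))
  have hsupI (x : X) : usup x ∈ I := abs_le.1 ((hC₂ x).trans (le_max_right _ _))
  have := hst.hrw.1
  have hΩ := hst.hmeasΩ
  have hmν := hst.hrev.ae_restrict_ae_of_ae hst.hrw hΩ
    ((measure_mono subset_union_left).trans_lt hst.hfin).ne
  obtain ⟨K, hK⟩ := hg.contDiffOn.exists_lipschitzOnWith one_ne_zero (convex_Icc _ _) isCompact_Icc
  have hint {v : X → ℝ} (hv : Measurable v) (hvI : ∀ x, v x ∈ I) (x : X) : Integrable v (m x) :=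
    integrable_of_ae_mem_Icc hv.aestronglyMeasurable (ae_of_all _ hvI)
  have hab : usub ≤ᵐ[ν] usup :=
    ae_of_ae_restrict_mClosure hst.hrw hΩ hle fun x hx ↦ by rw [hsubExt x hx, hsupExt x hx]
  have hsub_T : usub ≤ᵐ[ν] picardMap m Ω g K usub :=
    ae_le_picardMap hΩ (hint hsubMeas hsubI) hsubIneq
      (ae_notMem_imp_of_ae_restrict_mBoundary hst.hrw hΩ hsubBdry fun x hx ↦ (hsubExt x hx).le)
  have hT_sup : picardMap m Ω g K usup ≤ᵐ[ν] usup :=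
    picardMap_ae_le hΩ (hint hsupMeas hsupI) hsupIneq
      (ae_notMem_imp_of_ae_restrict_mBoundary hst.hrw hΩ hsupBdry fun x hx ↦ (hsupExt x hx).ge)
  obtain ⟨_, ⟨w, rfl⟩, hu, hsub_le, hle_sup, hfix⟩ :=
    (aeMonotoneBetween_picardMap hmν hΩ hK hsubI hsupI).exists_ae_fixedPoint
      (fun _ ↦ measurable_picardMap hst.hrw hΩ hg.continuous.measurable) hsubMeas hsupMeas
      (fun _ _ hv _ hav hvb ↦ tendsto_picardMap hmν hΩ hg.continuous hv
        fun n ↦ ae_mem_Icc_of_ae_le hsubI hsupI (hav n) (hvb n))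
      hab hsub_T hT_sup
  have huI := ae_mem_Icc_of_ae_le hsubI hsupI hsub_le hle_sup
  have hmem :=
    memL20_of_ae_mem_Icc hst.hrw hΩ hst.hfin.ne hu huI fun _ hx ↦ indicator_of_notMem hx _
  have heq := ae_neg_deltaM_eq_of_picardMap_eq hmν hΩ hu huI hfix
  refine ⟨⟨_, hmem, ?_⟩, fun _ ↦ ⟨_, hmem, ae_restrict_of_ae (hsub_le.and hle_sup), heq⟩⟩
  filter_upwards [heq, ae_restrict_of_ae hsub_le, ae_restrict_of_ae hle_sup] with x hx h₁ h₂
  rwa [if_neg (not_lt.2 h₁), if_pos h₂]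

/-- **Sub- and supersolution method**: given an `L^∞`-bounded subsolution `usub` and
supersolution `usup` of `(P(g))` with `usub ≤ usup`, the truncated problem `(P(h))` has a
solution; if moreover `g` is non-decreasing, there is a solution `u` of `(P(g))` with
`usub ≤ u ≤ usup`. -/
theorem sub_supersolution_method
    {X : Type*} [MeasurableSpace X] [MeasurableSpace.CountablyGenerated X]
    (m : X → MeasureTheory.Measure X) (ν : MeasureTheory.Measure X)
    (Ω : Set X) (lam : ℝ) (φ : X → ℝ) (α M : ℝ)
    (hst : Standing m ν Ω lam φ α M)
    (g : ℝ → ℝ) (hg : ContDiff ℝ 1 g)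
    (usub usup : X → ℝ)
    (hsubMeas : Measurable usub)
    (hsubL2 : MeasureTheory.MemLp usub 2 (ν.restrict (mClosure m Ω)))
    (hsubExt : ∀ x ∉ mClosure m Ω, usub x = 0)
    (hsubBdd : ∃ C, ∀ x, |usub x| ≤ C)
    (hsubIneq : ∀ᵐ x ∂(ν.restrict Ω), -(deltaM m usub x) ≤ g (usub x))
    (hsubBdry : ∀ᵐ x ∂(ν.restrict (mBoundary m Ω)), usub x ≤ 0)
    (hsupMeas : Measurable usup)
    (hsupL2 : MeasureTheory.MemLp usup 2 (ν.restrict (mClosure m Ω)))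
    (hsupExt : ∀ x ∉ mClosure m Ω, usup x = 0)
    (hsupBdd : ∃ C, ∀ x, |usup x| ≤ C)
    (hsupIneq : ∀ᵐ x ∂(ν.restrict Ω), g (usup x) ≤ -(deltaM m usup x))
    (hsupBdry : ∀ᵐ x ∂(ν.restrict (mBoundary m Ω)), 0 ≤ usup x)
    (hle : ∀ᵐ x ∂(ν.restrict (mClosure m Ω)), usub x ≤ usup x) :
    (∃ u : X → ℝ, MemL20 m ν Ω u ∧
      ∀ᵐ x ∂(ν.restrict Ω), -(deltaM m u x) =
        (if u x < usub x then g (usub x)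
         else if u x ≤ usup x then g (u x) else g (usup x))) ∧
    (Monotone g → ∃ u : X → ℝ, MemL20 m ν Ω u ∧
      (∀ᵐ x ∂(ν.restrict (mClosure m Ω)), usub x ≤ u x ∧ u x ≤ usup x) ∧
      ∀ᵐ x ∂(ν.restrict Ω), -(deltaM m u x) = g (u x)) :=
  sub_supersolution_method_general m ν Ω lam φ α M hst g hg usub usup hsubMeas hsubExt hsubBdd
    hsubIneq hsubBdry hsupMeas hsupExt hsupBdd hsupIneq hsupBdry hle
end
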